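/- arXiv:2308.13943 — 3 statements merged into one kernel-verified Lean document; each statement's English description precedes it below -/
import Mathlib

section
/- Let A be the continuous augmented system matrix, C = e_1ᵀ, and let ω_o ∈ ℝ. Define the observer gain L ∈ ℝ^{r+1} by L_i = binom(r+1, i) · ω_o^i for i = 1, …, r+1. Then the characteristic polynomial of A − L C equals (X + ω_o)^{r+1}; i.e., all r+1 eigenvalues of A − L C are placed at −ω_o. -/
open Matrix Polynomial

/-- Continuous augmented system matrix `A`: the `(r+1)×(r+1)` upper shift matrix. -/
def Amat (r : ℕ) : Matrix (Fin (r + 1)) (Fin (r + 1)) ℝ :=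
  fun i j => if (j : ℕ) = (i : ℕ) + 1 then 1 else 0

/-- The matrix `L C`, whose first column is `L` and whose other columns are zero. -/
def LCmat (r : ℕ) (L : Fin (r + 1) → ℝ) : Matrix (Fin (r + 1)) (Fin (r + 1)) ℝ :=
  fun i j => if (j : ℕ) = 0 then L i else 0

/-- Companion-type matrix: shift minus first-column gains. -/
def compMat (n : ℕ) (c : Fin (n + 1) → ℝ) : Matrix (Fin (n + 1)) (Fin (n + 1)) ℝ :=
  fun i j => (if (j : ℕ) = (i : ℕ) + 1 then 1 else 0) - (if (j : ℕ) = 0 then c i else 0)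

lemma compMat_charpoly (n : ℕ) :
    ∀ c : Fin (n + 1) → ℝ,
      (compMat n c).charpoly
        = X ^ (n + 1) + ∑ i : Fin (n + 1), C (c i) * X ^ (n - (i : ℕ)) := by
  induction n with
  | zero =>
      intro c
      rw [Matrix.charpoly, Matrix.det_fin_one, charmatrix_apply_eq]
      have : compMat 0 c 0 0 = -(c 0) := by simp [compMat]
      rw [this, map_neg, sub_neg_eq_add]
      simp
  | succ n ih =>
      intro c
      set M := compMat (n + 1) c with hM
      have hlast0 : (Fin.last (n + 1) : Fin (n + 2)) ≠ 0 := by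
        simp [Fin.ext_iff]
      -- expand along the last row
      rw [Matrix.charpoly, Matrix.det_succ_row _ (Fin.last (n + 1))]
      -- the last row of the charmatrix has only two nonzero entries: j = 0 and j = last
      rw [Fin.sum_univ_succ]
      have hsucc : (Fin.last n).succ = Fin.last (n + 1) := rfl
      -- tail sum: only j = last survives
      have htail :
          ∑ j : Fin (n + 1),
              (-1 : ℝ[X]) ^ ((Fin.last (n + 1) : ℕ) + ((Fin.succ j : Fin (n + 2)) : ℕ)) *
                charmatrix M (Fin.last (n + 1)) (Fin.succ j) *
                det ((charmatrix M).submatrix (Fin.last (n + 1)).succAbove (Fin.succ j).succAbove)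
            = X * det ((charmatrix M).submatrix Fin.castSucc Fin.castSucc) := by
        rw [Finset.sum_eq_single (Fin.last n)]
        · rw [hsucc, charmatrix_apply_eq]
          have hMll : M (Fin.last (n + 1)) (Fin.last (n + 1)) = 0 := by
            simp [hM, compMat, Fin.ext_iff]
          rw [hMll, map_zero, sub_zero]
          have hsign : (-1 : ℝ[X]) ^ ((Fin.last (n + 1) : ℕ) + ((Fin.last (n + 1) : Fin (n + 2)) : ℕ)) = 1 := by
            rw [← two_mul, pow_mul]
            norm_num
          rw [hsign, one_mul]
          congr 1
          · ext p q
            simp [Fin.succAbove_last]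
        · intro j _ hj
          have h1 : (Fin.succ j : Fin (n + 2)) ≠ Fin.last (n + 1) := by
            intro h
            exact hj (Fin.succ_injective _ (h.trans hsucc.symm))
          have h2 : charmatrix M (Fin.last (n + 1)) (Fin.succ j) = 0 := by
            rw [charmatrix_apply_ne _ _ _ (Ne.symm h1)]
            have : M (Fin.last (n + 1)) (Fin.succ j) = 0 := by
              simp [hM, compMat, Fin.ext_iff, -Fin.val_eq_zero_iff]
              omega
            rw [this, map_zero, neg_zero]
          rw [h2]
          ring
        · intro h; exact absurd (Finset.mem_univ _) h
      rw [htail]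
      -- the j = 0 term
      have hc0 : charmatrix M (Fin.last (n + 1)) 0 = C (c (Fin.last (n + 1))) := by
        rw [charmatrix_apply_ne _ _ _ hlast0]
        have : M (Fin.last (n + 1)) 0 = -(c (Fin.last (n + 1))) := by
          simp [hM, compMat]
        rw [this, map_neg, neg_neg]
      rw [hc0]
      -- the minor at (last, 0) is lower triangular with diagonal -1
      have hminor0 :
          det ((charmatrix M).submatrix (Fin.last (n + 1)).succAbove (0 : Fin (n+2)).succAbove)
            = (-1 : ℝ[X]) ^ (n + 1) := by
        have hlt : ((charmatrix M).submatrix (Fin.last (n + 1)).succAbove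
            (0 : Fin (n+2)).succAbove).BlockTriangular OrderDual.toDual := by
          intro p q hpq
          have hpq' : (p : ℕ) < (q : ℕ) := hpq
          have hne : (Fin.last (n+1)).succAbove p ≠ (0 : Fin (n+2)).succAbove q := by
            simp [Fin.succAbove_last, Fin.succAbove_zero, Fin.ext_iff]
            omega
          simp only [Matrix.submatrix_apply]
          rw [charmatrix_apply_ne _ _ _ hne]
          have : M ((Fin.last (n+1)).succAbove p) ((0 : Fin (n+2)).succAbove q) = 0 := by
            simp [hM, compMat, Fin.succAbove_last, Fin.succAbove_zero, Fin.ext_iff, -Fin.val_eq_zero_iff]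
            omega
          rw [this, map_zero, neg_zero]
        rw [Matrix.det_of_lowerTriangular _ hlt]
        have : ∀ p : Fin (n + 1),
            ((charmatrix M).submatrix (Fin.last (n + 1)).succAbove
              (0 : Fin (n+2)).succAbove) p p = -1 := by
          intro p
          have hne : (Fin.last (n+1)).succAbove p ≠ (0 : Fin (n+2)).succAbove p := by
            simp [Fin.succAbove_last, Fin.succAbove_zero, Fin.ext_iff]
          simp only [Matrix.submatrix_apply]
          rw [charmatrix_apply_ne _ _ _ hne]
          have : M ((Fin.last (n+1)).succAbove p) ((0 : Fin (n+2)).succAbove p) = 1 := by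
            simp [hM, compMat, Fin.succAbove_last, Fin.succAbove_zero, Fin.ext_iff, -Fin.val_eq_zero_iff]
          rw [this, _root_.map_one]
        rw [Finset.prod_congr rfl (fun p _ => this p), Finset.prod_const]
        simp
      rw [hminor0]
      -- the minor at (last, last) is the charmatrix of the smaller companion matrix
      have hminor1 :
          ((charpoly (compMat n (fun i => c i.castSucc))) : ℝ[X])
            = det ((charmatrix M).submatrix Fin.castSucc Fin.castSucc) := by
        rw [Matrix.charpoly]
        congr 1
        ext p q
        simp only [Matrix.submatrix_apply]
        by_cases hpq : p = q
        · subst hpq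
          rw [charmatrix_apply_eq, charmatrix_apply_eq]
          have : compMat n (fun i => c i.castSucc) p p = M p.castSucc p.castSucc := by
            simp [hM, compMat]
          rw [this]
        · have hpq' : (Fin.castSucc p : Fin (n+2)) ≠ Fin.castSucc q :=
            fun h => hpq (Fin.castSucc_injective _ h)
          rw [charmatrix_apply_ne _ _ _ hpq, charmatrix_apply_ne _ _ _ hpq']
          have : compMat n (fun i => c i.castSucc) p q = M p.castSucc q.castSucc := by
            simp [hM, compMat]
          rw [this]
      rw [← hminor1, ih]
      -- now pure algebra
      have hsign0 : (-1 : ℝ[X]) ^ ((Fin.last (n + 1) : ℕ) + ((0 : Fin (n + 2)) : ℕ)) = (-1) ^ (n + 1) := by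
        norm_num
      rw [hsign0]
      rw [Fin.sum_univ_castSucc (f := fun i : Fin (n + 2) => C (c i) * X ^ (n + 1 - (i : ℕ)))]
      have hXmul : X * (X ^ (n + 1) + ∑ i : Fin (n + 1), C (c i.castSucc) * X ^ (n - (i : ℕ)))
          = X ^ (n + 2) + ∑ i : Fin (n + 1), C (c i.castSucc) * X ^ (n + 1 - ((i.castSucc : Fin (n+2)) : ℕ)) := by
        rw [mul_add, Finset.mul_sum, ← pow_succ']
        refine congrArg₂ (· + ·) rfl ?_
        refine Finset.sum_congr rfl fun i _ => ?_
        have hle : (i : ℕ) ≤ n := Fin.is_le i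
        have : n + 1 - ((i.castSucc : Fin (n+2)) : ℕ) = (n - (i : ℕ)) + 1 := by
          simp [Fin.coe_castSucc]
          omega
        rw [this, pow_succ]
        ring
      rw [hXmul]
      have hlastexp : n + 1 - ((Fin.last (n + 1) : Fin (n+2)) : ℕ) = 0 := by simp
      rw [hlastexp]
      have : (-1 : ℝ[X]) ^ (n + 1) * C (c (Fin.last (n + 1))) * (-1) ^ (n + 1)
          = C (c (Fin.last (n + 1))) := by
        have h : (-1 : ℝ[X]) ^ (n + 1) * (-1 : ℝ[X]) ^ (n + 1) = 1 := by
          rw [← pow_add, ← two_mul, pow_mul]; norm_num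
        calc (-1 : ℝ[X]) ^ (n + 1) * C (c (Fin.last (n + 1))) * (-1) ^ (n + 1)
            = ((-1 : ℝ[X]) ^ (n + 1) * (-1 : ℝ[X]) ^ (n + 1)) * C (c (Fin.last (n + 1))) := by ring
          _ = C (c (Fin.last (n + 1))) := by rw [h, one_mul]
      rw [this]
      ring

/-- with the observer gain `L_i = binom(r+1, i) ω_o^i` (1-indexed,
`i = 1, …, r+1`), the characteristic polynomial of `A − L C` equals `(X + ω_o)^{r+1}`,
i.e. all `r+1` eigenvalues of `A − L C` are placed at `−ω_o`. -/
theorem continuous_eso_pole_placement (r : ℕ) (hr : 1 ≤ r) (ωo : ℝ)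
    (L : Fin (r + 1) → ℝ)
    (hL : ∀ i : Fin (r + 1), L i = (Nat.choose (r + 1) ((i : ℕ) + 1) : ℝ) * ωo ^ ((i : ℕ) + 1)) :
    (Amat r - LCmat r L).charpoly = (X + C ωo) ^ (r + 1) := by
  have hM : Amat r - LCmat r L = compMat r L := by
    ext i j
    simp [Amat, LCmat, compMat]
  rw [hM, compMat_charpoly]
  rw [add_pow]
  rw [Finset.sum_range_succ]
  have h1 : X ^ (r + 1) * (C ωo) ^ (r + 1 - (r + 1)) * ((r+1).choose (r+1) : ℝ[X])
      = X ^ (r + 1) := by simp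
  rw [h1]
  have h2 : ∑ i : Fin (r + 1), C (L i) * X ^ (r - (i : ℕ))
      = ∑ k ∈ Finset.range (r + 1), X ^ k * (C ωo) ^ (r + 1 - k) * ((r+1).choose k : ℝ[X]) := by
    have hfin : ∑ i : Fin (r + 1), C (L i) * X ^ (r - (i : ℕ))
        = ∑ k ∈ Finset.range (r + 1),
            C (((r + 1).choose (k + 1) : ℝ) * ωo ^ (k + 1)) * X ^ (r - k) := by
      rw [← Fin.sum_univ_eq_sum_range (fun k => C (((r + 1).choose (k + 1) : ℝ) * ωo ^ (k + 1)) * X ^ (r - k))]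
      refine Finset.sum_congr rfl fun i _ => by rw [hL i]
    rw [hfin]
    rw [← Finset.sum_range_reflect (fun k => X ^ k * (C ωo) ^ (r + 1 - k) * ((r+1).choose k : ℝ[X])) (r + 1)]
    refine Finset.sum_congr rfl fun k hk => ?_
    have hkr : k ≤ r := by simpa [Nat.lt_succ_iff] using hk
    have e1 : r + 1 - 1 - k = r - k := by omega
    have e2 : r + 1 - (r - k) = k + 1 := by omega
    have e3 : (r + 1).choose (r - k) = (r + 1).choose (k + 1) := by
      have : r - k = (r + 1) - (k + 1) := by omega
      rw [this, Nat.choose_symm (by omega)]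
    rw [e1, e2, e3]
    rw [C_mul, C_pow, map_natCast (C : ℝ →+* ℝ[X])]
    ring
  rw [h2]
  ring
end

section
/- Let A_d be the discrete augmented system matrix, C = e_1ᵀ, D = e_{r+1}, let 0 ≤ ω_o < 1, and let L ∈ ℝ^{r+1} be an observer gain such that the characteristic polynomial of M := A_d − L C equals (X − ω_o)^{r+1}. Then for every k ≥ 1, the impulse response from the disturbance-increment input to the disturbance-estimation error equals the sequence p; explicitly, e_{r+1}ᵀ M^{k−1} D = p(k), where p(k) = 1 for 1 ≤ k ≤ r+1 and p(k) = Σ_{i=1}^{r+1} binom(k−1, i−1) (1−ω_o)^{i−1} ω_o^{k−i} for k ≥ r+2. -/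
open Matrix Polynomial

/-- Discrete augmented system matrix `A_d`. -/
def Ad (r : ℕ) : Matrix (Fin (r + 1)) (Fin (r + 1)) ℝ :=
  fun i j => if ((j : ℕ) = (i : ℕ) + 1) ∨ ((i : ℕ) = r ∧ (j : ℕ) = r) then 1 else 0

/-- `D = e_{r+1} ∈ ℝ^{r+1}`: the last standard basis vector. -/
def Dvec (r : ℕ) : Fin (r + 1) → ℝ := fun i => if (i : ℕ) = r then 1 else 0

/-- The sequence `p`: `p(k) = 1` for `1 ≤ k ≤ r+1` and
`p(k) = Σ_{i=1}^{r+1} binom(k−1, i−1) (1−ω)^{i−1} ω^{k−i}` for `k ≥ r+2`. -/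
noncomputable def pSeq (r : ℕ) (ω : ℝ) (k : ℕ) : ℝ :=
  if k ≤ r + 1 then 1
  else ∑ i ∈ Finset.Icc 1 (r + 1),
    (Nat.choose (k - 1) (i - 1) : ℝ) * (1 - ω) ^ (i - 1) * ω ^ (k - i)

lemma Ad_mulVec (r : ℕ) (v : Fin (r+1) → ℝ) (i : Fin (r+1)) :
    (Ad r *ᵥ v) i = if h : (i:ℕ) < r then v ⟨(i:ℕ)+1, by omega⟩ else v i := by
  simp only [Ad, mulVec, dotProduct]
  split_ifs with h
  · rw [Finset.sum_eq_single (⟨(i:ℕ)+1, by omega⟩ : Fin (r+1))]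
    · simp
    · intro b _ hb
      have : ¬((b:ℕ) = (i:ℕ)+1 ∨ ((i:ℕ) = r ∧ (b:ℕ) = r)) := by
        rintro (h1 | ⟨h2, h3⟩)
        · exact hb (by simpa [Fin.ext_iff] using h1)
        · omega
      simp [this]
    · simp
  · have hi : (i:ℕ) = r := by omega
    rw [Finset.sum_eq_single i]
    · simp [hi]
    · intro b _ hb
      have : ¬((b:ℕ) = (i:ℕ)+1 ∨ ((i:ℕ) = r ∧ (b:ℕ) = r)) := by
        rintro (h1 | ⟨h2, h3⟩)
        · have := b.isLt; omega
        · exact hb (by simp [Fin.ext_iff]; omega)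
      simp [this]
    · simp

lemma LCmat_mulVec (r : ℕ) (L : Fin (r+1) → ℝ) (v : Fin (r+1) → ℝ) (i : Fin (r+1)) :
    (LCmat r L *ᵥ v) i = L i * v 0 := by
  simp only [LCmat, mulVec, dotProduct]
  rw [Finset.sum_eq_single (0 : Fin (r+1))]
  · simp
  · intro b _ hb
    have : ¬((b:ℕ) = 0) := fun h => hb (Fin.ext (by simp [h]))
    simp [this]
  · simp

lemma dot_sum {n : Type*} [Fintype n] (v : n → ℝ) (s : Finset ℕ) (f : ℕ → n → ℝ) :
    v ⬝ᵥ ∑ i ∈ s, f i = ∑ i ∈ s, v ⬝ᵥ f i := by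
  induction s using Finset.cons_induction with
  | empty => simp
  | cons a s ha ih => rw [Finset.sum_cons, Finset.sum_cons, dotProduct_add, ih]

lemma sum_mulVec {n : Type*} [Fintype n] (s : Finset ℕ) (f : ℕ → Matrix n n ℝ) (v : n → ℝ) :
    (∑ i ∈ s, f i) *ᵥ v = ∑ i ∈ s, f i *ᵥ v := by
  induction s using Finset.cons_induction with
  | empty => simp
  | cons a s ha ih => rw [Finset.sum_cons, Finset.sum_cons, Matrix.add_mulVec, ih]

/-- key structural induction on powers of N = M - ω•1 applied to D -/
lemma key (r : ℕ) (ω : ℝ) (L : Fin (r+1) → ℝ) :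
    ∀ j, j ≤ r →
      (((Ad r - LCmat r L - ω • 1) ^ j *ᵥ Dvec r) ⟨r, lt_add_one r⟩ = (1-ω)^j
      ∧ ∀ i : Fin (r+1), (i:ℕ) < r - j → ((Ad r - LCmat r L - ω • 1) ^ j *ᵥ Dvec r) i = 0) := by
  intro j
  induction j with
  | zero =>
    intro _
    constructor
    · simp [Dvec]
    · intro i hi
      simp [Dvec]
      omega
  | succ j ih =>
    intro hj
    obtain ⟨h1, h2⟩ := ih (by omega)
    set N := Ad r - LCmat r L - ω • (1 : Matrix (Fin (r+1)) (Fin (r+1)) ℝ) with hN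
    set v := N ^ j *ᵥ Dvec r with hv
    have hstep : N ^ (j+1) *ᵥ Dvec r = N *ᵥ v := by
      rw [pow_succ', Matrix.mulVec_mulVec]
    have hentry : ∀ i : Fin (r+1), (N *ᵥ v) i =
        (if h : (i:ℕ) < r then v ⟨(i:ℕ)+1, by omega⟩ else v i) - L i * v 0 - ω * v i := by
      intro i
      rw [hN, Matrix.sub_mulVec, Matrix.sub_mulVec]
      have h3 : (ω • (1 : Matrix (Fin (r+1)) (Fin (r+1)) ℝ)) *ᵥ v = ω • v := by
        rw [Matrix.smul_mulVec, Matrix.one_mulVec]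
      rw [h3]
      simp only [Pi.sub_apply, Pi.smul_apply, smul_eq_mul]
      rw [Ad_mulVec, LCmat_mulVec]
    have hv0 : v 0 = 0 := by
      apply h2
      simp
      omega
    constructor
    · rw [hstep, hentry]
      have : ¬ ((⟨r, lt_add_one r⟩ : Fin (r+1)) : ℕ) < r := by simp
      rw [dif_neg this, hv0, h1]
      ring
    · intro i hi
      rw [hstep, hentry]
      have hir : (i:ℕ) < r := by omega
      rw [dif_pos hir, hv0]
      have e1 : v ⟨(i:ℕ)+1, by omega⟩ = 0 := by apply h2; simp; omega
      have e2 : v i = 0 := by apply h2; omega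
      rw [e1, e2]; ring


/-- if the observer gain `L` places all eigenvalues of `M = A_d − L C` at
`ω_o ∈ [0, 1)`, then for every `k ≥ 1` the impulse response from the
disturbance-increment input to the disturbance-estimation error equals `p`:
`e_{r+1}ᵀ M^{k−1} D = p(k)`. -/
theorem discrete_eso_impulse_response (r : ℕ) (hr : 1 ≤ r) (ωo : ℝ)
    (hω0 : 0 ≤ ωo) (hω1 : ωo < 1) (L : Fin (r + 1) → ℝ)
    (hL : (Ad r - LCmat r L).charpoly = (X - C ωo) ^ (r + 1)) :
    ∀ k : ℕ, 1 ≤ k →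
      (Dvec r) ⬝ᵥ (((Ad r - LCmat r L) ^ (k - 1)) *ᵥ (Dvec r)) = pSeq r ωo k := by
  intro k hk
  set M := Ad r - LCmat r L with hM
  set N := Ad r - LCmat r L - ωo • (1 : Matrix (Fin (r+1)) (Fin (r+1)) ℝ) with hN
  -- Cayley–Hamilton: N^(r+1) = 0
  have hCH : N ^ (r+1) = 0 := by
    have := Matrix.aeval_self_charpoly M
    rw [hL] at this
    rw [map_pow, map_sub, aeval_X, aeval_C, Algebra.algebraMap_eq_smul_one] at this
    exact this
  have hNzero : ∀ m, r + 1 ≤ m → N ^ m = 0 := fun m hm => pow_eq_zero_of_le hm hCH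
  -- scalar entries of N powers
  have hc : ∀ m, Dvec r ⬝ᵥ (N ^ m *ᵥ Dvec r) =
      if m ≤ r then (1 - ωo)^m else 0 := by
    intro m
    split_ifs with hm
    · obtain ⟨h1, h2⟩ := key r ωo L m hm
      rw [← h1]
      simp only [dotProduct, Dvec]
      rw [Finset.sum_eq_single (⟨r, lt_add_one r⟩ : Fin (r+1))]
      · simp [hN]
      · intro b _ hb
        have : ¬((b:ℕ) = r) := fun h => hb (by simpa [Fin.ext_iff] using h)
        simp [this]
      · simp
    · rw [hNzero m (by omega)]
      simp
  -- binomial expansion of M^(k-1)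
  have hcomm : Commute N (ωo • (1 : Matrix (Fin (r+1)) (Fin (r+1)) ℝ)) := by
    apply Commute.smul_right
    exact Commute.one_right N
  have hMN : M = N + ωo • 1 := by rw [hN, hM]; abel
  have hexp : M ^ (k-1) = ∑ m ∈ Finset.range k,
      ((Nat.choose (k-1) m : ℝ) * ωo ^ (k-1-m)) • N ^ m := by
    rw [hMN, Commute.add_pow hcomm]
    have hk1 : k - 1 + 1 = k := by omega
    rw [hk1]
    apply Finset.sum_congr rfl
    intro m _
    rw [_root_.smul_pow, one_pow, mul_smul_comm, mul_one,
      ← map_natCast (algebraMap ℝ (Matrix (Fin (r+1)) (Fin (r+1)) ℝ)) ((k-1).choose m),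
      Algebra.algebraMap_eq_smul_one, smul_mul_assoc, mul_smul_comm, mul_one, smul_smul]
    congr 1
    ring
  rw [hexp, _root_.sum_mulVec, dot_sum]
  simp only [Matrix.smul_mulVec, dotProduct_smul, smul_eq_mul, hc]
  unfold pSeq
  split_ifs with hkr
  · -- k ≤ r+1 : binomial theorem gives 1
    have hone : ((1 - ωo) + ωo) ^ (k-1) = 1 := by norm_num
    rw [add_pow] at hone
    rw [show k - 1 + 1 = k by omega] at hone
    refine Eq.trans (Finset.sum_congr rfl ?_) hone
    intro m hm
    have hm' : m ≤ r := by
      have := Finset.mem_range.mp hm; omega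
    rw [if_pos hm']
    ring
  · -- k ≥ r+2
    have hsub : Finset.range (r+1) ⊆ Finset.range k := by
      apply Finset.range_subset_range.mpr; omega
    rw [← Finset.sum_subset hsub]
    · rw [show Finset.Icc 1 (r+1) = Finset.Ico 1 (r+2) by exact (Finset.Ico_add_one_right_eq_Icc 1 (r+1)).symm,
        Finset.sum_Ico_eq_sum_range]
      simp only [show r + 2 - 1 = r + 1 from rfl]
      apply Finset.sum_congr rfl
      intro m hm
      have hm' : m ≤ r := by have := Finset.mem_range.mp hm; omega
      rw [if_pos hm']
      rw [show 1 + m - 1 = m by omega, show k - (1 + m) = k - 1 - m by omega]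
      ring
    · intro m hmk hmr
      have : ¬ m ≤ r := by
        have := Finset.mem_range.not.mp hmr; omega
      rw [if_neg this, mul_zero]
end

section
/- Let r ∈ ℕ and 0 ≤ ω < 1, and let p be the sequence defined by p(k) = 1 for 1 ≤ k ≤ r+1 and p(k) = Σ_{i=1}^{r+1} binom(k−1, i−1) (1−ω)^{i−1} ω^{k−i} for k ≥ r+2. Then p(k) ≥ 0 for every k ≥ 1, the series Σ_{k=1}^{∞} p(k) converges, and Σ_{k=1}^{∞} p(k) ≤ (r+1) + (r+1)/(1−ω). -/
lemma aux_hasSum {ω : ℝ} (hω0 : 0 ≤ ω) (hω1 : ω < 1) (j : ℕ) :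
    HasSum (fun m : ℕ => (Nat.choose m j : ℝ) * ω ^ (m - j)) (1 / (1 - ω) ^ (j + 1)) := by
  have h : ‖ω‖ < 1 := by rw [Real.norm_eq_abs, abs_of_nonneg hω0]; exact hω1
  have H := hasSum_choose_mul_geometric_of_norm_lt_one (𝕜 := ℝ) j h
  have H2 : HasSum (fun n : ℕ => (fun m : ℕ => (Nat.choose m j : ℝ) * ω ^ (m - j)) (n + j))
      (1 / (1 - ω) ^ (j + 1)) := by
    simpa using H
  have := (hasSum_nat_add_iff (f := fun m : ℕ => (Nat.choose m j : ℝ) * ω ^ (m - j)) j).mp H2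
  have hz : ∑ i ∈ Finset.range j, (Nat.choose i j : ℝ) * ω ^ (i - j) = 0 := by
    apply Finset.sum_eq_zero
    intro i hi
    rw [Finset.mem_range] at hi
    rw [Nat.choose_eq_zero_of_lt hi]
    simp
  rwa [hz, add_zero] at this

/-- for `0 ≤ ω < 1`, the sequence `p` is nonnegative on `k ≥ 1`, the series
`Σ_{k=1}^{∞} p(k)` converges, and its sum is at most `(r+1) + (r+1)/(1−ω)`. -/
theorem pSeq_nonneg_summable_bound (r : ℕ) (ω : ℝ) (hω0 : 0 ≤ ω) (hω1 : ω < 1) :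
    (∀ k : ℕ, 1 ≤ k → 0 ≤ pSeq r ω k) ∧
    Summable (fun k : ℕ => pSeq r ω (k + 1)) ∧
    ∑' k : ℕ, pSeq r ω (k + 1) ≤ (r + 1 : ℝ) + (r + 1 : ℝ) / (1 - ω) := by
  have h1 : (0:ℝ) < 1 - ω := by linarith
  -- nonnegativity
  have hnn : ∀ k : ℕ, 0 ≤ pSeq r ω k := by
    intro k
    unfold pSeq
    split
    · norm_num
    · apply Finset.sum_nonneg
      intro i _
      positivity
  -- majorants
  set f : ℕ → ℝ := fun k => if k ≤ r then 1 else 0 with hfdef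
  set g : ℕ → ℝ := fun k => ∑ i ∈ Finset.Icc 1 (r + 1),
      (Nat.choose k (i - 1) : ℝ) * (1 - ω) ^ (i - 1) * ω ^ (k + 1 - i) with hgdef
  have hgi : ∀ i ∈ Finset.Icc 1 (r + 1),
      HasSum (fun k : ℕ => (Nat.choose k (i - 1) : ℝ) * (1 - ω) ^ (i - 1) * ω ^ (k + 1 - i))
        (1 / (1 - ω)) := by
    intro i hi
    rw [Finset.mem_Icc] at hi
    have H := (aux_hasSum hω0 hω1 (i - 1)).mul_left ((1 - ω) ^ (i - 1))
    have hfun : (fun k : ℕ => (1 - ω) ^ (i - 1) * ((Nat.choose k (i - 1) : ℝ) * ω ^ (k - (i - 1))))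
        = fun k : ℕ => (Nat.choose k (i - 1) : ℝ) * (1 - ω) ^ (i - 1) * ω ^ (k + 1 - i) := by
      funext k
      have : k - (i - 1) = k + 1 - i := by omega
      rw [this]; ring
    have hval : (1 - ω) ^ (i - 1) * (1 / (1 - ω) ^ (i - 1 + 1)) = 1 / (1 - ω) := by
      rw [pow_succ]
      field_simp
    rwa [hfun, hval] at H
  have hg : HasSum g ((r + 1 : ℝ) / (1 - ω)) := by
    have := hasSum_sum (f := fun (i : ℕ) (k : ℕ) =>
        (Nat.choose k (i - 1) : ℝ) * (1 - ω) ^ (i - 1) * ω ^ (k + 1 - i))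
      (s := Finset.Icc 1 (r + 1)) hgi
    have hc : (∑ _i ∈ Finset.Icc 1 (r + 1), (1:ℝ) / (1 - ω)) = (r + 1 : ℝ) / (1 - ω) := by
      rw [Finset.sum_const, Nat.card_Icc, nsmul_eq_mul]
      push_cast
      ring_nf
    rwa [hc] at this
  have hf : HasSum f ((r + 1 : ℝ)) := by
    have h0 : ∀ k ∉ Finset.range (r + 1), f k = 0 := by
      intro k hk
      rw [Finset.mem_range] at hk
      simp only [hfdef]
      rw [if_neg (by omega)]
    have : HasSum f (∑ k ∈ Finset.range (r + 1), f k) := hasSum_sum_of_ne_finset_zero h0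
    have hs : ∑ k ∈ Finset.range (r + 1), f k = (r + 1 : ℝ) := by
      have h1' : ∀ k ∈ Finset.range (r + 1), f k = 1 := by
        intro k hk
        rw [Finset.mem_range] at hk
        simp only [hfdef]
        rw [if_pos (by omega)]
      rw [Finset.sum_congr rfl h1', Finset.sum_const]
      simp
    rwa [hs] at this
  have hfg := hf.add hg
  have hle : ∀ k : ℕ, pSeq r ω (k + 1) ≤ f k + g k := by
    intro k
    have hg0 : 0 ≤ g k := by
      apply Finset.sum_nonneg
      intro i _
      positivity
    unfold pSeq
    by_cases h : k ≤ r
    · rw [if_pos (by omega)]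
      simp only [hfdef]
      rw [if_pos h]
      linarith
    · rw [if_neg (by omega)]
      simp only [hfdef]
      rw [if_neg h]
      have : (∑ i ∈ Finset.Icc 1 (r + 1),
          (Nat.choose (k + 1 - 1) (i - 1) : ℝ) * (1 - ω) ^ (i - 1) * ω ^ (k + 1 - i)) = g k := by
        simp [hgdef]
      rw [this]
      linarith
  have hsum : Summable (fun k : ℕ => pSeq r ω (k + 1)) :=
    Summable.of_nonneg_of_le (fun k => hnn (k + 1)) hle hfg.summable
  refine ⟨fun k _ => hnn k, hsum, ?_⟩
  calc ∑' k : ℕ, pSeq r ω (k + 1) ≤ ∑' k : ℕ, (f k + g k) :=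
        Summable.tsum_le_tsum hle hsum hfg.summable
    _ = (r + 1 : ℝ) + (r + 1 : ℝ) / (1 - ω) := hfg.tsum_eq
end
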